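/- arXiv:0912.2091 — 8 statements merged into one kernel-verified Lean document; each statement's English description precedes it below -/
import Mathlib

section
/- If (1, a_1, ..., a_r) is an M-vector and b_k := 1 + a_1 + ... + a_k, then b_k^{<k>} ≥ b_{k+1} for all 1 ≤ k ≤ r-1, where l^{<i>} denotes the i-th Macaulay pseudo-power of l. -/
/-- The largest `n` with `C(n,i) ≤ l` (used in the greedy `i`-canonical
binomial representation). -/
noncomputable def macN (i l : ℕ) : ℕ := sSup {n : ℕ | Nat.choose n i ≤ l}

/-- The `i`-th Macaulay pseudo-power `l^{<i>}`, defined via the greedy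
(`i`-canonical) binomial representation of `l`, with `0^{<i>} = 0`. -/
noncomputable def pseudoPow : ℕ → ℕ → ℕ
  | 0, _ => 0
  | i + 1, l =>
    if l = 0 then 0
    else
      Nat.choose (macN (i + 1) l + 1) (i + 2) +
        pseudoPow i (l - Nat.choose (macN (i + 1) l) (i + 1))

/-!
Write `x^{<k>}` for `pseudoPow k x`. Splitting off the top binomial coefficient,
`x = C(n, k+1) + y` with `y < C(n, k)`, gives `x^{<k+1>} = C(n+1, k+2) + y^{<k>}`, and every
estimate is an induction on `k` through this recursion.

The heart of the matter is the inequality `c + a + a^{<k+1>} ≤ (c + a)^{<k+1>}` for `c ≥ 1` and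
`c + a ≤ c^{<k>}` (no condition for `k = 0`). Let `C(m, k+1)` and `C(p, k)` be the top
coefficients of `a` and `c`; the bound on `a` forces `m ≤ p`. If `c + a ≥ C(m+2, k+1)`, then
`a^{<k+1>} < C(m+2, k+2) ≤ (c + a)^{<k+1>} - (c + a)`. Otherwise the top coefficient of `c + a`
is `C(m+1, k+1)`, and removing the top terms on both sides leaves the same inequality in
degree `k`.

With `c = b_k`, `a = a_{k+1}` and `a_{k+2} ≤ a_{k+1}^{<k+1>}`, the inequality turns
`b_{k+1} ≤ b_k^{<k>}` into `b_{k+2} ≤ b_{k+1}^{<k+1>}`.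
-/

theorem succ_le_add_choose (n : ℕ) {i : ℕ} (hi : 1 ≤ i) : n + 1 ≤ i + n.choose i := by
  induction n with
  | zero => omega
  | succ n ih =>
    obtain ⟨j, rfl⟩ : ∃ j, i = j + 1 := ⟨i - 1, by omega⟩
    rcases lt_or_ge n j with h | h
    · omega
    · have := Nat.choose_pos h
      rw [Nat.choose_succ_succ']
      omega

theorem bddAbove_choose_le {i : ℕ} (hi : 1 ≤ i) (l : ℕ) :
    BddAbove {n : ℕ | n.choose i ≤ l} :=
  ⟨l + i, fun n (hn : n.choose i ≤ l) => by have := succ_le_add_choose n hi; omega⟩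

theorem choose_macN_le {i : ℕ} (hi : 1 ≤ i) (l : ℕ) : (macN i l).choose i ≤ l :=
  Nat.sSup_mem ⟨0, by simp [Nat.choose_eq_zero_of_lt hi]⟩ (bddAbove_choose_le hi l)

theorem lt_choose_macN_succ {i : ℕ} (hi : 1 ≤ i) (l : ℕ) : l < (macN i l + 1).choose i := by
  by_contra! h
  have : macN i l + 1 ≤ macN i l := le_csSup (bddAbove_choose_le hi l) h
  omega

theorem macN_eq_of_choose_le_of_lt {i l n : ℕ} (hi : 1 ≤ i) (h₁ : n.choose i ≤ l)
    (h₂ : l < (n + 1).choose i) : macN i l = n := by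
  refine le_antisymm ?_ (le_csSup (bddAbove_choose_le hi l) h₁)
  by_contra! h
  have := Nat.choose_le_choose i (show n + 1 ≤ macN i l by omega)
  have := choose_macN_le hi l
  omega

theorem exists_eq_choose_add (k x : ℕ) :
    ∃ n y : ℕ, y < n.choose k ∧ x = n.choose (k + 1) + y := by
  have hle := choose_macN_le (Nat.le_add_left 1 k) x
  have hlt := lt_choose_macN_succ (Nat.le_add_left 1 k) x
  rw [Nat.choose_succ_succ'] at hlt
  exact ⟨macN (k + 1) x, x - (macN (k + 1) x).choose (k + 1), by omega, by omega⟩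

theorem exists_eq_choose_add_of_ne_zero (k : ℕ) {x : ℕ} (hx : x ≠ 0) :
    ∃ n y : ℕ, k < n ∧ y < n.choose k ∧ x = n.choose (k + 1) + y := by
  obtain ⟨n, y, hy, rfl⟩ := exists_eq_choose_add k x
  refine ⟨n, y, ?_, hy, rfl⟩
  by_contra! hn
  rcases hn.lt_or_eq with hn | rfl
  · simp [Nat.choose_eq_zero_of_lt hn] at hy
  · rw [Nat.choose_self] at hy
    rw [Nat.choose_succ_self] at hx
    omega

theorem pseudoPow_zero_right (k : ℕ) : pseudoPow k 0 = 0 := by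
  cases k <;> simp [pseudoPow]

theorem pseudoPow_choose_add {k n y : ℕ} (hy : y < n.choose k) :
    pseudoPow (k + 1) (n.choose (k + 1) + y) = (n + 1).choose (k + 2) + pseudoPow k y := by
  rcases Nat.eq_zero_or_pos (n.choose (k + 1) + y) with h | h
  · have hy0 : y = 0 := by omega
    have hn : n < k + 1 := Nat.choose_eq_zero_iff.mp (by omega)
    have hkn : k ≤ n := by
      by_contra! h'
      simp [Nat.choose_eq_zero_of_lt h'] at hy
    obtain rfl : n = k := by omega
    simp [hy0, pseudoPow_zero_right]
  · have hmac : macN (k + 1) (n.choose (k + 1) + y) = n := by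
      refine macN_eq_of_choose_le_of_lt (Nat.le_add_left 1 k) (by omega) ?_
      rw [Nat.choose_succ_succ']
      omega
    rw [pseudoPow, if_neg h.ne', hmac, Nat.add_sub_cancel_left]

theorem pseudoPow_one (n : ℕ) : pseudoPow 1 n = (n + 1).choose 2 := by
  simpa [pseudoPow_zero_right] using pseudoPow_choose_add (k := 0) (n := n) (y := 0) (by simp)

theorem le_pseudoPow_succ (k x : ℕ) : x ≤ pseudoPow (k + 1) x := by
  obtain ⟨n, y, hy, rfl⟩ := exists_eq_choose_add k x
  rw [pseudoPow_choose_add hy, Nat.choose_succ_succ' n (k + 1)]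
  have : y ≤ pseudoPow k y := by
    cases k with
    | zero => rw [Nat.choose_zero_right] at hy; omega
    | succ k => exact le_pseudoPow_succ k y
  omega

theorem pseudoPow_lt_add_choose : ∀ {j N x : ℕ}, j < N → x < N.choose j →
    pseudoPow j x < x + N.choose (j + 1)
  | 0, N, x, hN, _ => by
    rw [pseudoPow, zero_add, Nat.choose_one_right]
    omega
  | j + 1, N, x, hN, hx => by
    rcases Nat.eq_zero_or_pos x with rfl | hx₀
    · simpa [pseudoPow_zero_right] using Nat.choose_pos hN
    obtain ⟨m, y, hjm, hy, rfl⟩ := exists_eq_choose_add_of_ne_zero j hx₀.ne'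
    have hmN : m < N := by
      by_contra! h
      have := Nat.choose_le_choose (j + 1) h
      omega
    have := pseudoPow_lt_add_choose hjm hy
    have := Nat.choose_le_choose (j + 2) (show m + 1 ≤ N from hmN)
    have := Nat.choose_succ_succ' m (j + 1)
    rw [pseudoPow_choose_add hy]
    simp only [Nat.add_assoc, Nat.reduceAdd] at *
    omega

theorem add_choose_le_pseudoPow {j M x : ℕ} (hj : 1 ≤ j) (hjM : j ≤ M)
    (hx : M.choose j ≤ x) :
    x + M.choose (j + 1) ≤ pseudoPow j x := by
  obtain ⟨k, rfl⟩ : ∃ k, j = k + 1 := ⟨j - 1, by omega⟩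
  obtain ⟨n, y, hy, rfl⟩ := exists_eq_choose_add k x
  have hMn : M ≤ n := by
    by_contra! h
    have := Nat.choose_le_choose (k + 1) h
    rw [Nat.choose_succ_succ'] at this
    omega
  have hy_le : y ≤ pseudoPow k y := by
    cases k with
    | zero => rw [Nat.choose_zero_right] at hy; omega
    | succ k => exact le_pseudoPow_succ k y
  have := Nat.choose_le_choose (k + 2) hMn
  rw [pseudoPow_choose_add hy, Nat.choose_succ_succ' n (k + 1)]
  simp only [Nat.add_assoc, Nat.reduceAdd] at *
  omega

theorem add_pseudoPow_le_pseudoPow_of_choose_le {j N x y : ℕ} (hj : 1 ≤ j) (hjN : j < N)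
    (hy : y < N.choose j) (hx : (N + 1).choose j ≤ x) : x + pseudoPow j y ≤ pseudoPow j x := by
  have := pseudoPow_lt_add_choose hjN hy
  have := add_choose_le_pseudoPow hj (by omega) hx
  rw [Nat.choose_succ_succ' N j] at this
  omega

theorem choose_add_add_pseudoPow_le {k m x y : ℕ} (hx : x < (m + 1).choose (k + 1))
    (hy : y < m.choose (k + 1)) (h : x + pseudoPow (k + 1) y ≤ pseudoPow (k + 1) x) :
    (m + 1).choose (k + 2) + x + pseudoPow (k + 2) (m.choose (k + 2) + y) ≤
      pseudoPow (k + 2) ((m + 1).choose (k + 2) + x) := by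
  rw [pseudoPow_choose_add hx, pseudoPow_choose_add hy, Nat.choose_succ_succ' (m + 1) (k + 2)]
  simp only [Nat.add_assoc, Nat.reduceAdd] at *
  omega

theorem le_of_choose_le_of_add_le_pseudoPow {k m p y a : ℕ} (hkp : k < p)
    (hy : y < p.choose k) (hm : m.choose (k + 2) ≤ a)
    (h : p.choose (k + 1) + y + a ≤ pseudoPow (k + 1) (p.choose (k + 1) + y)) : m ≤ p := by
  have := pseudoPow_lt_add_choose hkp hy
  have : (p + 1).choose (k + 2) = p.choose (k + 1) + p.choose (k + 2) :=
    Nat.choose_succ_succ' p (k + 1)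
  rw [pseudoPow_choose_add hy] at h
  by_contra! hpm
  have := Nat.choose_le_choose (k + 2) (show p + 1 ≤ m from hpm)
  omega

theorem add_add_pseudoPow_le_pseudoPow_add :
    ∀ (k : ℕ) {c a : ℕ}, 1 ≤ c → (1 ≤ k → c + a ≤ pseudoPow k c) →
    c + a + pseudoPow (k + 1) a ≤ pseudoPow (k + 1) (c + a)
  | 0, c, a, hc, _ => by
    have := Nat.choose_le_choose 2 (show a + 1 ≤ c + a by omega)
    have : (c + a + 1).choose 2 = c + a + (c + a).choose 2 := by
      simpa using Nat.choose_succ_succ' (c + a) 1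
    rw [pseudoPow_one, pseudoPow_one]
    omega
  | k + 1, c, a, hc, hca => by
    rcases Nat.eq_zero_or_pos a with rfl | ha
    · simpa [pseudoPow_zero_right] using le_pseudoPow_succ (k + 1) c
    obtain ⟨m, a₂, hkm, ha₂, rfl⟩ := exists_eq_choose_add_of_ne_zero (k + 1) ha.ne'
    obtain ⟨p, c₂, hkp, hc₂, hc_eq⟩ :=
      exists_eq_choose_add_of_ne_zero k (show c ≠ 0 by omega)
    replace hca := hca (by omega)
    rw [show k + 1 + 1 = k + 2 from rfl] at hca ⊢
    have hmp : m ≤ p := le_of_choose_le_of_add_le_pseudoPow hkp hc₂ (Nat.le_add_right _ _)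
      (hc_eq ▸ hca)
    rw [hc_eq, pseudoPow_choose_add hc₂, ← hc_eq] at hca
    have hm_succ : (m + 1).choose (k + 2) = m.choose (k + 1) + m.choose (k + 2) :=
      Nat.choose_succ_succ' m (k + 1)
    by_cases hbig : (m + 2).choose (k + 2) ≤ c + (m.choose (k + 2) + a₂)
    · exact add_pseudoPow_le_pseudoPow_of_choose_le (by omega) (by omega) (by omega) hbig
    obtain ⟨e, rfl⟩ : ∃ e, c = m.choose (k + 1) + e :=
      ⟨c - m.choose (k + 1), by have := Nat.choose_le_choose (k + 1) hmp; omega⟩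
    have inner : e + a₂ + pseudoPow (k + 1) a₂ ≤ pseudoPow (k + 1) (e + a₂) := by
      rcases hmp.lt_or_eq with hlt | rfl
      · have he : m.choose k ≤ e := by
          have := Nat.choose_le_choose (k + 1) (show m + 1 ≤ p from hlt)
          have := Nat.choose_succ_succ' m k
          omega
        refine add_add_pseudoPow_le_pseudoPow_add k (le_trans (Nat.choose_pos (by omega)) he)
          (fun hk => ?_)
        have := add_choose_le_pseudoPow hk (by omega) he
        omega
      · obtain rfl : e = c₂ := by omega
        rcases Nat.eq_zero_or_pos e with rfl | he
        · obtain rfl : a₂ = 0 := by rw [pseudoPow_zero_right] at hca; omega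
          simp
        · exact add_add_pseudoPow_le_pseudoPow_add k he (fun _ => by omega)
    have hsum : m.choose (k + 1) + e + (m.choose (k + 2) + a₂) =
        (m + 1).choose (k + 2) + (e + a₂) := by
      omega
    have : (m + 2).choose (k + 2) = (m + 1).choose (k + 1) + (m + 1).choose (k + 2) :=
      Nat.choose_succ_succ' (m + 1) (k + 1)
    rw [hsum]
    exact choose_add_add_pseudoPow_le (by omega) ha₂ inner

theorem add_le_pseudoPow_add {k c a a' : ℕ} (hc : 1 ≤ c)
    (hca : 1 ≤ k → c + a ≤ pseudoPow k c) (ha' : a' ≤ pseudoPow (k + 1) a) :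
    c + a + a' ≤ pseudoPow (k + 1) (c + a) :=
  le_trans (by omega) (add_add_pseudoPow_le_pseudoPow_add k hc hca)

/-- If `(1, a_1, …, a_r)` is an M-vector and `b_k = 1 + a_1 + ⋯ + a_k`,
then `b_k^{<k>} ≥ b_{k+1}` for `1 ≤ k ≤ r - 1`. -/
theorem stmt0 (r : ℕ) (a : ℕ → ℕ) (ha0 : a 0 = 1)
    (hM : ∀ i, 1 ≤ i → i + 1 ≤ r → a (i + 1) ≤ pseudoPow i (a i))
    (b : ℕ → ℕ) (hb : ∀ k, b k = ∑ j ∈ Finset.range (k + 1), a j) :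
    ∀ k, 1 ≤ k → k ≤ r - 1 → b (k + 1) ≤ pseudoPow k (b k) := by
  have hb_succ (k : ℕ) : b (k + 1) = b k + a (k + 1) := by rw [hb, hb, Finset.sum_range_succ]
  have hb_pos (k : ℕ) : 1 ≤ b k := by
    have : a 0 ≤ b k := hb k ▸ Finset.single_le_sum (fun _ _ => Nat.zero_le _)
      (Finset.mem_range.2 k.succ_pos)
    omega
  have key (k : ℕ) : k + 1 ≤ r → 1 ≤ k → b (k + 1) ≤ pseudoPow k (b k) := by
    induction k with
    | zero => omega
    | succ k ih =>
      intro hkr _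
      rw [hb_succ (k + 1), hb_succ k]
      exact add_le_pseudoPow_add (hb_pos k) (fun hk => hb_succ k ▸ ih (by omega) hk)
        (hM (k + 1) (by omega) hkr)
  exact fun k hk hkr => key k (by omega) hk
end

section
/- For any integer x > 4 and any integer y with 1 < y < x, the identity C(x,2) - x + y = C(x-1,2) + C(y-1,1) holds, and consequently the 2nd Macaulay pseudo-power satisfies (C(x,2) - x + y)^{<2>} = C(x+1,3) - C(x,2) + C(y,2). -/
lemma macN_eq (i l n : ℕ) (h1 : Nat.choose n i ≤ l) (h2 : l < Nat.choose (n + 1) i) :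
    macN i l = n := by
  apply IsGreatest.csSup_eq
  constructor
  · exact h1
  · intro m hm
    by_contra hmn
    push_neg at hmn
    exact absurd (le_trans (Nat.choose_le_choose i hmn) hm) (not_le.mpr h2)

/-- For integers `x > 4` and `1 < y < x`:
`C(x,2) - x + y = C(x-1,2) + C(y-1,1)`, and consequently
`(C(x,2) - x + y)^{<2>} = C(x+1,3) - C(x,2) + C(y,2)`. -/
theorem stmt1 (x y : ℕ) (hx : 4 < x) (hy1 : 1 < y) (hyx : y < x) :
    Nat.choose x 2 - x + y = Nat.choose (x - 1) 2 + Nat.choose (y - 1) 1 ∧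
    pseudoPow 2 (Nat.choose x 2 - x + y) =
      Nat.choose (x + 1) 3 - Nat.choose x 2 + Nat.choose y 2 := by
  have hx1 : x - 1 + 1 = x := by omega
  have hA : Nat.choose x 2 = Nat.choose (x - 1) 1 + Nat.choose (x - 1) 2 := by
    rw [← hx1]; exact Nat.choose_succ_succ (x - 1) 1
  rw [Nat.choose_one_right] at hA
  have hB : 1 ≤ Nat.choose (x - 1) 2 := Nat.choose_pos (by omega)
  have hC : Nat.choose (y - 1) 1 = y - 1 := Nat.choose_one_right _
  have hfirst : Nat.choose x 2 - x + y = Nat.choose (x - 1) 2 + Nat.choose (y - 1) 1 := by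
    omega
  refine ⟨hfirst, ?_⟩
  set l := Nat.choose x 2 - x + y with hl
  have hlval : l = Nat.choose (x - 1) 2 + (y - 1) := by omega
  have hlub : l < Nat.choose x 2 := by omega
  have hm2 : macN 2 l = x - 1 := by
    apply macN_eq
    · omega
    · rwa [hx1]
  have hlne : l ≠ 0 := by omega
  rw [show (2 : ℕ) = 1 + 1 from rfl, pseudoPow, if_neg hlne, hm2, hx1]
  have hrem : l - Nat.choose (x - 1) 2 = y - 1 := by omega
  rw [hrem]
  have hm1 : macN 1 (y - 1) = y - 1 := by
    apply macN_eq <;> simp [Nat.choose_one_right]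
  rw [pseudoPow, if_neg (by omega : y - 1 ≠ 0), hm1, show y - 1 + 1 = y from by omega,
    pseudoPow]
  have hD : Nat.choose (x + 1) 3 = Nat.choose x 2 + Nat.choose x 3 :=
    Nat.choose_succ_succ x 2
  norm_num at *
  omega
end

section
/- Let Δ be a (d-1)-dimensional simplicial sphere and B ⊂ Δ a (d-1)-dimensional triangulated ball with complementary ball C := (Δ \ B) ∪ ∂B, so that f_i(B) + f_i(C) = f_i(Δ) + f_i(∂B) for all i. Assume the Dehn-Sommerville relation g_i(∂B) = h_i(B) - h_{d-i}(B) holds for 0 ≤ i ≤ d (with g_0(∂B) = 1). Then h_i(C) = h_i(Δ) - h_{d-i}(B) for all 0 ≤ i ≤ d. -/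
/-- The `h`-vector entries of a `(d-1)`-dimensional complex from the face
numbers: here `f j` denotes `f_{j-1}` (so `f 0 = f_{-1} = 1`), and
`h_i = ∑_{j=0}^{i} (-1)^{i-j} C(d-j, i-j) f_{j-1}`. -/
def hvec (d : ℕ) (f : ℕ → ℤ) (i : ℕ) : ℤ :=
  ∑ j ∈ Finset.range (i + 1), (-1 : ℤ) ^ (i - j) * (Nat.choose (d - j) (i - j) : ℤ) * f j

lemma hvec_succ_dim (d : ℕ) (f : ℕ → ℤ) (i : ℕ) (hi1 : 1 ≤ i) (hid : i ≤ d) :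
    hvec d f i = hvec (d - 1) f i - hvec (d - 1) f (i - 1) := by
  unfold hvec
  have hii : i - 1 + 1 = i := Nat.succ_pred_eq_of_pos hi1
  rw [hii, Finset.sum_range_succ, Finset.sum_range_succ (n := i)]
  have hlast : (-1 : ℤ) ^ (i - i) * (Nat.choose (d - i) (i - i) : ℤ) * f i =
      (-1 : ℤ) ^ (i - i) * (Nat.choose (d - 1 - i) (i - i) : ℤ) * f i := by
    simp [Nat.sub_self]
  have hmain : ∑ j ∈ Finset.range i, (-1 : ℤ) ^ (i - j) * (Nat.choose (d - j) (i - j) : ℤ) * f j =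
      ∑ j ∈ Finset.range i, ((-1 : ℤ) ^ (i - j) * (Nat.choose (d - 1 - j) (i - j) : ℤ) * f j -
        (-1 : ℤ) ^ (i - 1 - j) * (Nat.choose (d - 1 - j) (i - 1 - j) : ℤ) * f j) := by
    apply Finset.sum_congr rfl
    intro j hj
    have hji : j < i := Finset.mem_range.mp hj
    have ha : i - j = (i - 1 - j) + 1 := by omega
    have hb : d - j = (d - 1 - j) + 1 := by omega
    rw [ha, hb, Nat.choose_succ_succ]
    push_cast
    ring
  rw [hmain, Finset.sum_sub_distrib, hlast]
  ring

/-- Let `Δ` be a `(d-1)`-sphere, `B ⊆ Δ` a `(d-1)`-ball with complementary ball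
`C`, so that `f_i(B) + f_i(C) = f_i(Δ) + f_i(∂B)` for all `i`.  Assuming the
Dehn–Sommerville relation `g_i(∂B) = h_i(B) - h_{d-i}(B)` for `0 ≤ i ≤ d`
(with `g_0(∂B) = 1`), we get `h_i(C) = h_i(Δ) - h_{d-i}(B)` for `0 ≤ i ≤ d`. -/
theorem stmt6 (d : ℕ) (hd : 1 ≤ d) (fD fB fC fdB : ℕ → ℤ)
    (hdB0 : fdB 0 = 1)
    (hdBdim : ∀ j, d ≤ j → fdB j = 0)
    (hadd : ∀ i, i ≤ d → fB i + fC i = fD i + fdB i)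
    (hDS : ∀ i, i ≤ d →
      (if i = 0 then 1 else hvec (d - 1) fdB i - hvec (d - 1) fdB (i - 1)) =
        hvec d fB i - hvec d fB (d - i)) :
    ∀ i, i ≤ d → hvec d fC i = hvec d fD i - hvec d fB (d - i) := by
  have lin : ∀ i, i ≤ d → hvec d fB i + hvec d fC i = hvec d fD i + hvec d fdB i := by
    intro i hi
    unfold hvec
    rw [← Finset.sum_add_distrib, ← Finset.sum_add_distrib]
    apply Finset.sum_congr rfl
    intro j hj
    have hjd : j ≤ d := le_trans (Nat.lt_succ_iff.mp (Finset.mem_range.mp hj)) hi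
    have := hadd j hjd
    linear_combination ((-1 : ℤ) ^ (i - j) * (Nat.choose (d - j) (i - j) : ℤ)) * this
  have hg : ∀ i, i ≤ d → hvec d fdB i = hvec d fB i - hvec d fB (d - i) := by
    intro i hi
    rcases Nat.eq_zero_or_pos i with h0 | h1
    · subst h0
      have := hDS 0 (Nat.zero_le d)
      simp only [if_pos rfl] at this
      rw [← this]
      simp [hvec, hdB0]
    · have := hDS i hi
      rw [if_neg (by omega)] at this
      rw [hvec_succ_dim d fdB i h1 hi, this]
  intro i hi
  have h1 := lin i hi
  have h2 := hg i hi
  linarith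
end

section
/- Let G be a graph on vertex set [x+d] (with x > 4, d ≥ 1) having exactly x edges and a vertex v of degree k with 2 ≤ k < x. Let A be the set of 3-element subsets {a,b,c} of [x+d] such that at least one of the pairs {a,b}, {b,c}, {a,c} is an edge of G. Then |A| ≥ x²/2 + ((2d-3)/2)·x + (k-1)(x-k), i.e., 2|A| ≥ x² + (2d-3)x + 2(k-1)(x-k). -/
/-!
Writing `e(s)` for the number of edges inside a 3-set `s`, the elementary inequality
`[e > 0] ≥ e - C(e, 2) + [e = 3]` summed over all triples bounds `|A|` below by
`x (n - 2) - P + T`, where `n = x + d`, each edge lies in `n - 2` triples, `P` counts pairs of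
edges sharing a vertex (the pairs inside some triple) and `T` counts triangles. So
`P = C(x, 2) - D` with `D` the number of disjoint pairs of edges, and it remains to see
`D + T ≥ (k - 1)(x - k)`: each of the `x - k` edges `f` avoiding `v` is disjoint from at least
`k - 2` of the `k` edges at `v`, and from `k - 1` of them unless `f` together with `v` spans a
triangle.
-/

open Finset

namespace Sym2

variable {α : Type*} [DecidableEq α]

theorem toFinset_injective : Function.Injective (toFinset : Sym2 α → Finset α) :=
  fun _ _ h => Sym2.ext fun x => by rw [← mem_toFinset, h, mem_toFinset]

theorem mem_sym2_iff_toFinset_subset {z : Sym2 α} {s : Finset α} :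
    z ∈ s.sym2 ↔ z.toFinset ⊆ s := by
  simp only [Finset.mem_sym2_iff, Finset.subset_iff, mem_toFinset]

theorem three_le_card_toFinset_union {z w : Sym2 α} (hz : ¬z.IsDiag) (hw : ¬w.IsDiag)
    (hzw : z ≠ w) : 3 ≤ #(z.toFinset ∪ w.toFinset) := by
  by_contra! h
  have hz2 := card_toFinset_of_not_isDiag z hz
  have hw2 := card_toFinset_of_not_isDiag w hw
  exact hzw <| toFinset_injective <|
    (eq_of_subset_of_card_le subset_union_left (by omega)).trans
      (eq_of_subset_of_card_le subset_union_right (by omega)).symm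

end Sym2

theorem Finset.card_filter_powersetCard_succ_superset {α : Type*} [Fintype α] [DecidableEq α]
    (t : Finset α) :
    #{s ∈ (univ : Finset α).powersetCard (#t + 1) | t ⊆ s} = Fintype.card α - #t := by
  have himage :
      {s ∈ (univ : Finset α).powersetCard (#t + 1) | t ⊆ s} = tᶜ.image (insert · t) := by
    ext s
    simp only [mem_filter, mem_powersetCard_univ, mem_image, mem_compl]
    constructor
    · rintro ⟨hcard, hts⟩
      obtain ⟨c, hcs, hct⟩ := exists_mem_notMem_of_card_lt_card (hcard ▸ lt_add_one #t)
      refine ⟨c, hct, eq_of_subset_of_card_le (insert_subset hcs hts) ?_⟩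
      rw [card_insert_of_notMem hct, hcard]
    · rintro ⟨c, hct, rfl⟩
      exact ⟨card_insert_of_notMem hct, subset_insert c t⟩
  rw [himage, card_image_of_injOn, card_compl]
  intro c hc c' _ (h : insert c t = insert c' t)
  exact (mem_insert.1 (h ▸ mem_insert_self c t)).resolve_right (mem_compl.1 hc)

theorem Nat.self_add_ite_le_ite_add_choose_two (m : ℕ) :
    m + (if 3 ≤ m then 1 else 0) ≤ (if 0 < m then 1 else 0) + m.choose 2 := by
  match m with
  | 0 | 1 | 2 => simp
  | n + 3 =>
    have := Nat.choose_pos (show 2 ≤ n + 2 by omega)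
    have : (n + 3).choose 2 = n + 2 + (n + 2).choose 2 := by
      rw [Nat.choose_succ_succ', Nat.choose_one_right]
    rw [if_pos (by omega), if_pos (by omega)]
    omega

namespace SimpleGraph

variable {V : Type*} [Fintype V] [DecidableEq V] (G : SimpleGraph V) [DecidableRel G.Adj]

def edgesIn (s : Finset V) : Finset (Sym2 V) := G.edgeFinset ∩ s.sym2

def triangleTriples : Finset (Finset V) :=
  {s ∈ univ.powersetCard 3 | 3 ≤ #(G.edgesIn s)}

-- These are exactly the pairs of vertex-disjoint edges.
def separatedEdgePairs : Finset (Finset (Sym2 V)) :=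
  {p ∈ G.edgeFinset.powersetCard 2 | ¬∃ s ∈ univ.powersetCard 3, p ⊆ s.sym2}

variable {G}

theorem exists_adj_iff_edgesIn_nonempty {s : Finset V} :
    (∃ a ∈ s, ∃ b ∈ s, G.Adj a b) ↔ (G.edgesIn s).Nonempty := by
  constructor
  · rintro ⟨a, ha, b, hb, hab⟩
    exact ⟨s(a, b), mem_inter.2 ⟨mem_edgeFinset.2 hab, mk_mem_sym2_iff.2 ⟨ha, hb⟩⟩⟩
  · rintro ⟨e, he⟩
    induction e with
    | _ a b =>
      obtain ⟨hab, hs⟩ := mem_inter.1 he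
      exact ⟨a, (mk_mem_sym2_iff.1 hs).1, b, (mk_mem_sym2_iff.1 hs).2, mem_edgeFinset.1 hab⟩

theorem card_toFinset_of_mem_edgeFinset {e : Sym2 V} (he : e ∈ G.edgeFinset) :
    #e.toFinset = 2 :=
  Sym2.card_toFinset_of_not_isDiag e (G.not_isDiag_of_mem_edgeSet (mem_edgeFinset.1 he))

theorem three_le_card_sup_toFinset {p : Finset (Sym2 V)}
    (hp : p ∈ G.edgeFinset.powersetCard 2) : 3 ≤ #(p.sup Sym2.toFinset) := by
  obtain ⟨hpE, hp2⟩ := mem_powersetCard.1 hp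
  obtain ⟨z, w, hzw, rfl⟩ := card_eq_two.1 hp2
  have hdiag : ∀ e ∈ ({z, w} : Finset (Sym2 V)), ¬e.IsDiag := fun e he =>
    G.not_isDiag_of_mem_edgeSet (mem_edgeFinset.1 (hpE he))
  simpa using Sym2.three_le_card_toFinset_union (hdiag z (by simp)) (hdiag w (by simp)) hzw

variable (G)

theorem sum_card_edgesIn :
    ∑ s ∈ univ.powersetCard 3, #(G.edgesIn s) = #G.edgeFinset * (Fintype.card V - 2) := by
  calc ∑ s ∈ univ.powersetCard 3, #(G.edgesIn s)
      = ∑ e ∈ G.edgeFinset, #{s ∈ univ.powersetCard 3 | e ∈ s.sym2} := by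
        simp only [edgesIn, ← filter_mem_eq_inter]
        exact sum_card_bipartiteAbove_eq_sum_card_bipartiteBelow _
    _ = ∑ _e ∈ G.edgeFinset, (Fintype.card V - 2) := sum_congr rfl fun e he => by
        have := card_filter_powersetCard_succ_superset e.toFinset
        rw [card_toFinset_of_mem_edgeFinset he] at this
        simpa only [Sym2.mem_sym2_iff_toFinset_subset] using this
    _ = #G.edgeFinset * (Fintype.card V - 2) := by rw [sum_const, smul_eq_mul]

theorem sum_card_edgesIn_add_card_triangleTriples_le :
    ∑ s ∈ univ.powersetCard 3, #(G.edgesIn s) + #G.triangleTriples ≤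
      #{s ∈ univ.powersetCard 3 | 0 < #(G.edgesIn s)} +
        ∑ s ∈ univ.powersetCard 3, (#(G.edgesIn s)).choose 2 := by
  simp only [triangleTriples, card_filter, ← sum_add_distrib]
  exact sum_le_sum fun s _ => Nat.self_add_ite_le_ite_add_choose_two _

theorem sum_choose_card_edgesIn_add_card_separatedEdgePairs_le :
    ∑ s ∈ univ.powersetCard 3, (#(G.edgesIn s)).choose 2 + #G.separatedEdgePairs ≤
      (#G.edgeFinset).choose 2 := by
  rw [separatedEdgePairs, ← card_powersetCard, ← card_filter_add_card_filter_not
    (s := G.edgeFinset.powersetCard 2) (fun p => ∃ s ∈ univ.powersetCard 3, p ⊆ s.sym2)]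
  refine Nat.add_le_add_right ?_ _
  -- two distinct edges span at least three vertices, so they lie in at most one triple
  have hdisj : ∀ s ∈ univ.powersetCard 3, ∀ t ∈ univ.powersetCard 3, s ≠ t →
      Disjoint ((G.edgesIn s).powersetCard 2) ((G.edgesIn t).powersetCard 2) := by
    intro s hs t ht hst
    refine Finset.disjoint_left.2 fun p hps hpt => hst ?_
    have hp : p ∈ G.edgeFinset.powersetCard 2 := powersetCard_mono inter_subset_left hps
    have hsub : ∀ u ∈ univ.powersetCard 3, p ∈ (G.edgesIn u).powersetCard 2 →
        p.sup Sym2.toFinset = u := fun u hu hpu =>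
      eq_of_subset_of_card_le
        (Finset.sup_le fun e he => Sym2.mem_sym2_iff_toFinset_subset.1
          (mem_inter.1 ((mem_powersetCard.1 hpu).1 he)).2)
        ((mem_powersetCard_univ.1 hu).symm ▸ three_le_card_sup_toFinset hp)
    exact (hsub s hs hps).symm.trans (hsub t ht hpt)
  simp only [← card_powersetCard 2 (G.edgesIn _)]
  rw [← card_biUnion hdisj]
  refine card_le_card fun p hp => ?_
  obtain ⟨s, hs, hps⟩ := mem_biUnion.1 hp
  obtain ⟨hpsub, hp2⟩ := mem_powersetCard.1 hps
  simp only [mem_filter]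
  exact ⟨mem_powersetCard.2 ⟨hpsub.trans inter_subset_left, hp2⟩,
    s, hs, hpsub.trans inter_subset_right⟩

variable {G}

theorem card_incidenceFinset_le_card_disjoint_add {v : V} {f : Sym2 V} (hf : v ∉ f) :
    #(G.incidenceFinset v) ≤
      #{e ∈ G.incidenceFinset v | Disjoint e.toFinset f.toFinset} + 1 +
        if ∀ y ∈ f, G.Adj v y then 1 else 0 := by
  rw [← card_filter_add_card_filter_not (s := G.incidenceFinset v)
    (fun e => Disjoint e.toFinset f.toFinset), add_assoc]
  refine Nat.add_le_add_left ?_ _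
  -- an edge at `v` meeting `f` is `s(v, y)` for a neighbour `y` of `v` on `f`
  have hmeet : {e ∈ G.incidenceFinset v | ¬Disjoint e.toFinset f.toFinset} ⊆
      {y ∈ f.toFinset | G.Adj v y}.image (s(v, ·)) := by
    intro e he
    obtain ⟨he, hmeet⟩ := mem_filter.1 he
    obtain ⟨heG, hve⟩ := (G.mem_incidenceFinset v e).1 he
    obtain ⟨y, hye, hyf⟩ := not_disjoint_iff.1 hmeet
    have hvy : v ≠ y := fun h => hf (h ▸ Sym2.mem_toFinset.1 hyf)
    obtain rfl := (Sym2.mem_and_mem_iff hvy).1 ⟨hve, Sym2.mem_toFinset.1 hye⟩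
    exact mem_image_of_mem _ (mem_filter.2 ⟨hyf, heG⟩)
  refine (card_le_card hmeet).trans (card_image_le.trans ?_)
  have hf2 : #f.toFinset ≤ 2 := by rw [Sym2.card_toFinset]; split_ifs <;> omega
  split_ifs with hadj
  · exact (card_filter_le _ _).trans hf2
  · obtain ⟨y, hyf, hny⟩ := not_forall₂.1 hadj
    have : #{y ∈ f.toFinset | G.Adj v y} < #f.toFinset :=
      card_lt_card (filter_ssubset.2 ⟨y, Sym2.mem_toFinset.2 hyf, hny⟩)
    omega

theorem sum_card_disjoint_le_card_separatedEdgePairs (v : V) :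
    ∑ f ∈ G.edgeFinset with v ∉ f,
        #{e ∈ G.incidenceFinset v | Disjoint e.toFinset f.toFinset} ≤
      #G.separatedEdgePairs := by
  have hprod : ∑ f ∈ G.edgeFinset with v ∉ f,
        #{e ∈ G.incidenceFinset v | Disjoint e.toFinset f.toFinset} =
      #{x ∈ {f ∈ G.edgeFinset | v ∉ f} ×ˢ G.incidenceFinset v |
        Disjoint x.2.toFinset x.1.toFinset} := by
    rw [card_filter, sum_product]
    simp only [card_filter]
  rw [hprod]
  refine card_le_card_of_injOn (fun x => {x.2, x.1}) ?_ ?_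
  · rintro ⟨f, e⟩ hx
    rw [mem_coe, mem_filter, mem_product] at hx
    obtain ⟨⟨hf, he⟩, hdisj⟩ := hx
    obtain ⟨hfG, hvf⟩ := mem_filter.1 hf
    obtain ⟨heG, hve⟩ := (G.mem_incidenceFinset v e).1 he
    have heG : e ∈ G.edgeFinset := mem_edgeFinset.2 heG
    have hef : e ≠ f := fun h => hvf (h ▸ hve)
    simp only [separatedEdgePairs, mem_coe, mem_filter, mem_powersetCard]
    refine ⟨⟨insert_subset heG (singleton_subset_iff.2 hfG), card_pair hef⟩, ?_⟩
    rintro ⟨s, hs, hsub⟩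
    have := card_le_card (union_subset
      (Sym2.mem_sym2_iff_toFinset_subset.1 (hsub (mem_insert_self e {f})))
      (Sym2.mem_sym2_iff_toFinset_subset.1 (hsub (mem_insert_of_mem (mem_singleton_self f)))))
    rw [card_union_of_disjoint hdisj, card_toFinset_of_mem_edgeFinset heG,
      card_toFinset_of_mem_edgeFinset hfG, hs.2] at this
    omega
  · rintro ⟨f, e⟩ hx ⟨f', e'⟩ hx' (h : ({e, f} : Finset (Sym2 V)) = {e', f'})
    have hv : ∀ x ∈ {f ∈ G.edgeFinset | v ∉ f} ×ˢ G.incidenceFinset v,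
        v ∉ x.1 ∧ v ∈ x.2 :=
      fun x hx => ⟨(mem_filter.1 (mem_product.1 hx).1).2,
        ((G.mem_incidenceFinset v _).1 (mem_product.1 hx).2).2⟩
    obtain ⟨hvf, hve⟩ := hv _ (mem_filter.1 (mem_coe.1 hx)).1
    obtain ⟨hvf', hve'⟩ := hv _ (mem_filter.1 (mem_coe.1 hx')).1
    have he : e ∈ ({e', f'} : Finset (Sym2 V)) := h ▸ mem_insert_self e {f}
    have hf : f ∈ ({e', f'} : Finset (Sym2 V)) := h ▸ mem_insert_of_mem (mem_singleton_self f)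
    simp only [mem_insert, mem_singleton] at he hf
    obtain rfl := he.resolve_right fun h => hvf' (h ▸ hve)
    obtain rfl := hf.resolve_left fun h => hvf (h ▸ hve')
    rfl

theorem card_edges_opposite_le_card_triangleTriples (v : V) :
    #{f ∈ G.edgeFinset | v ∉ f ∧ ∀ y ∈ f, G.Adj v y} ≤ #G.triangleTriples := by
  refine card_le_card_of_injOn (fun f => insert v f.toFinset) ?_ ?_
  · intro f hf
    obtain ⟨hfG, hvf, hadj⟩ := mem_filter.1 hf
    have hvf' : v ∉ f.toFinset := fun h => hvf (Sym2.mem_toFinset.1 h)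
    have hsub : insert f (f.toFinset.map (Sym2.mkEmbedding v)) ⊆
        G.edgesIn (insert v f.toFinset) := by
      intro e he
      rcases mem_insert.1 he with rfl | he
      · exact mem_inter.2 ⟨hfG, Sym2.mem_sym2_iff_toFinset_subset.2 (subset_insert _ _)⟩
      · obtain ⟨y, hy, rfl⟩ := mem_map.1 he
        exact mem_inter.2 ⟨mem_edgeFinset.2 (hadj y (Sym2.mem_toFinset.1 hy)),
          mk_mem_sym2_iff.2 ⟨mem_insert_self _ _, mem_insert_of_mem hy⟩⟩
    have hcard : #(insert f (f.toFinset.map (Sym2.mkEmbedding v))) = 3 := by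
      rw [card_insert_of_notMem, card_map, card_toFinset_of_mem_edgeFinset hfG]
      intro h
      obtain ⟨y, _, hy⟩ := mem_map.1 h
      exact hvf (hy ▸ Sym2.mem_mk_left v y)
    refine mem_filter.2 ⟨mem_powersetCard_univ.2 ?_, hcard ▸ card_le_card hsub⟩
    rw [card_insert_of_notMem hvf', card_toFinset_of_mem_edgeFinset hfG]
  · intro f hf f' hf' (h : insert v f.toFinset = insert v f'.toFinset)
    have hvf : v ∉ f.toFinset := fun h => (mem_filter.1 hf).2.1 (Sym2.mem_toFinset.1 h)
    have hvf' : v ∉ f'.toFinset := fun h => (mem_filter.1 hf').2.1 (Sym2.mem_toFinset.1 h)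
    exact Sym2.toFinset_injective (by rw [← erase_insert hvf, h, erase_insert hvf'])

variable (G)

theorem degree_sub_one_mul_le_card_separatedEdgePairs_add (v : V) :
    (G.degree v - 1) * (#G.edgeFinset - G.degree v) ≤
      #G.separatedEdgePairs + #G.triangleTriples := by
  have hfar : #{f ∈ G.edgeFinset | v ∉ f} = #G.edgeFinset - G.degree v := by
    have := card_filter_add_card_filter_not (s := G.edgeFinset) (fun f => v ∈ f)
    rw [← card_incidenceFinset_eq_degree, incidenceFinset_eq_filter]
    omega
  calc (G.degree v - 1) * (#G.edgeFinset - G.degree v)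
      = ∑ f ∈ G.edgeFinset with v ∉ f, (#(G.incidenceFinset v) - 1) := by
        rw [sum_const, smul_eq_mul, hfar, card_incidenceFinset_eq_degree, mul_comm]
    _ ≤ ∑ f ∈ G.edgeFinset with v ∉ f,
          (#{e ∈ G.incidenceFinset v | Disjoint e.toFinset f.toFinset} +
            if ∀ y ∈ f, G.Adj v y then 1 else 0) := sum_le_sum fun f hf => by
        have := card_incidenceFinset_le_card_disjoint_add (G := G) (mem_filter.1 hf).2
        omega
    _ = ∑ f ∈ G.edgeFinset with v ∉ f,
          #{e ∈ G.incidenceFinset v | Disjoint e.toFinset f.toFinset} +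
        #{f ∈ G.edgeFinset | v ∉ f ∧ ∀ y ∈ f, G.Adj v y} := by
        rw [sum_add_distrib, ← card_filter, filter_filter]
    _ ≤ #G.separatedEdgePairs + #G.triangleTriples :=
        add_le_add (sum_card_disjoint_le_card_separatedEdgePairs v)
          (card_edges_opposite_le_card_triangleTriples v)

theorem card_edgeFinset_mul_add_le (v : V) :
    #G.edgeFinset * (Fintype.card V - 2) + (G.degree v - 1) * (#G.edgeFinset - G.degree v) ≤
      #{s ∈ univ.powersetCard 3 | 0 < #(G.edgesIn s)} + (#G.edgeFinset).choose 2 := by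
  have hbonf := G.sum_card_edgesIn_add_card_triangleTriples_le
  have hpairs := G.sum_choose_card_edgesIn_add_card_separatedEdgePairs_le
  have hstar := G.degree_sub_one_mul_le_card_separatedEdgePairs_add v
  rw [sum_card_edgesIn] at hbonf
  omega

end SimpleGraph

theorem stmt8_general (x d k : ℕ)
    (G : SimpleGraph (Fin (x + d))) [DecidableRel G.Adj]
    (hE : G.edgeFinset.card = x)
    (v : Fin (x + d)) (hv : G.degree v = k) (hk2 : 2 ≤ k) (hkx : k < x) :
    (x : ℤ) ^ 2 + (2 * (d : ℤ) - 3) * (x : ℤ) +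
        2 * ((k : ℤ) - 1) * ((x : ℤ) - (k : ℤ)) ≤
      2 * ({s : Finset (Fin (x + d)) |
              s.card = 3 ∧ ∃ a ∈ s, ∃ b ∈ s, G.Adj a b}.ncard : ℤ) := by
  have hA : {s : Finset (Fin (x + d)) | s.card = 3 ∧ ∃ a ∈ s, ∃ b ∈ s, G.Adj a b} =
      ↑{s ∈ (univ : Finset (Fin (x + d))).powersetCard 3 | 0 < #(G.edgesIn s)} := by
    ext s
    simp [SimpleGraph.exists_adj_iff_edgesIn_nonempty, card_pos]
  have hchoose : (x.choose 2 : ℤ) * 2 = x * (x - 1) := by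
    have := Nat.div_mul_cancel (Nat.even_mul_pred_self x).two_dvd
    rw [← Nat.choose_two_right] at this
    rw [← Nat.cast_pred (by omega)]
    exact_mod_cast this
  have key := G.card_edgeFinset_mul_add_le v
  rw [hE, hv, Fintype.card_fin] at key
  rw [hA, Set.ncard_coe_finset]
  replace key := (Nat.cast_le (α := ℤ)).2 key
  push_cast [Nat.cast_sub (show 2 ≤ x + d by omega), Nat.cast_sub (show 1 ≤ k by omega),
    Nat.cast_sub hkx.le] at key
  linarith

/-- Let `G` be a graph on `[x+d]` (with `x > 4`, `d ≥ 1`) with exactly `x`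
edges and a vertex `v` of degree `k`, `2 ≤ k < x`.  If `A` is the collection of
3-element vertex subsets containing at least one edge of `G`, then
`2|A| ≥ x² + (2d-3)x + 2(k-1)(x-k)`. -/
theorem stmt8 (x d k : ℕ) (hx : 4 < x) (hd : 1 ≤ d)
    (G : SimpleGraph (Fin (x + d))) [DecidableRel G.Adj]
    (hE : G.edgeFinset.card = x)
    (v : Fin (x + d)) (hv : G.degree v = k) (hk2 : 2 ≤ k) (hkx : k < x) :
    (x : ℤ) ^ 2 + (2 * (d : ℤ) - 3) * (x : ℤ) +
        2 * ((k : ℤ) - 1) * ((x : ℤ) - (k : ℤ)) ≤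
      2 * ({s : Finset (Fin (x + d)) |
              s.card = 3 ∧ ∃ a ∈ s, ∃ b ∈ s, G.Adj a b}.ncard : ℤ) :=
  stmt8_general x d k G hE v hv hk2 hkx
end

section
/- Let d be even and x > 4, 1 < y < x be integers. The h-vector h = (1, x, C(x,2), C(x+1,3)-2, C(x+1,3)-2, ..., C(x+1,3)-2, C(x,2) - (C(y,2)+1), x-y, 0) of length d+1 has corresponding f-vector satisfying f_0 = d + x, C(d+x, 2) - f_1 = x, and C(d+x, 3) - f_2 = x²/2 + ((2d-3)/2)x + 2. -/
lemma choose2_cast {R : Type*} [CommRing R] (n : ℕ) :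
    ((n.choose 2 : ℕ) : R) * 2 = (n : R) ^ 2 - n := by
  induction n with
  | zero => simp
  | succ m ih =>
    rw [Nat.choose_succ_succ]
    push_cast [Nat.choose_one_right] at ih ⊢
    ring_nf
    ring_nf at ih
    linear_combination ih

lemma choose3_cast {R : Type*} [CommRing R] (n : ℕ) :
    ((n.choose 3 : ℕ) : R) * 6 = (n : R) ^ 3 - 3 * (n : R) ^ 2 + 2 * n := by
  induction n with
  | zero => simp
  | succ m ih =>
    rw [Nat.choose_succ_succ]
    push_cast at ih ⊢
    have h2 := choose2_cast (R := R) m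
    push_cast at h2
    linear_combination ih + 3 * h2

/-- The face numbers from an `h`-vector: `fvec d h j` is `f_{j-1}`, via
`f_{j-1} = ∑_{i=0}^{j} C(d-i, j-i) h_i`. -/
def fvec (d : ℕ) (h : ℕ → ℤ) (j : ℕ) : ℤ :=
  ∑ i ∈ Finset.range (j + 1), (Nat.choose (d - i) (j - i) : ℤ) * h i

/-- For `d` even and integers `x > 4`, `1 < y < x`, the `h`-vector
`(1, x, C(x,2), C(x+1,3)-2, …, C(x+1,3)-2, C(x,2)-(C(y,2)+1), x-y, 0)` of
length `d+1` has `f`-vector satisfying `f_0 = d + x`, `C(d+x,2) - f_1 = x`, and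
`C(d+x,3) - f_2 = x²/2 + ((2d-3)/2)x + 2`. -/
theorem stmt11 (d x y : ℕ) (hd : Even d) (hd6 : 6 ≤ d)
    (hx : 4 < x) (hy1 : 1 < y) (hyx : y < x)
    (h : ℕ → ℤ)
    (hh : h = fun i =>
      if i = 0 then 1
      else if i = 1 then (x : ℤ)
      else if i = 2 then (Nat.choose x 2 : ℤ)
      else if i ≤ d - 3 then (Nat.choose (x + 1) 3 : ℤ) - 2
      else if i = d - 2 then (Nat.choose x 2 : ℤ) - ((Nat.choose y 2 : ℤ) + 1)
      else if i = d - 1 then (x : ℤ) - (y : ℤ)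
      else 0) :
    fvec d h 1 = (d : ℤ) + (x : ℤ) ∧
    (Nat.choose (d + x) 2 : ℤ) - fvec d h 2 = (x : ℤ) ∧
    (Nat.choose (d + x) 3 : ℚ) - (fvec d h 3 : ℚ) =
      (x : ℚ) ^ 2 / 2 + ((2 * (d : ℚ) - 3) / 2) * (x : ℚ) + 2 := by
  subst hh
  obtain ⟨k, rfl⟩ : ∃ k, d = 6 + k := ⟨d - 6, by omega⟩
  have e1 : 6 + k - 1 = 5 + k := by omega
  have e2 : 6 + k - 2 = 4 + k := by omega
  have e3 : 6 + k - 3 = 3 + k := by omega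
  simp only [fvec, Finset.sum_range_succ, Finset.sum_range_zero, e1, e2, e3]
  norm_num
  constructor
  · have a := choose2_cast (R := ℤ) (6 + k + x)
    have b := choose2_cast (R := ℤ) (6 + k)
    have c := choose2_cast (R := ℤ) x
    push_cast at a b c
    have key : ((((6 + k + x).choose 2 : ℕ) : ℤ) -
        (((6 + k).choose 2 : ℕ) + (5 + (k:ℤ)) * x + ((x.choose 2 : ℕ) : ℤ))) * 2 = (x : ℤ) * 2 := by
      linear_combination a - b - c
    linarith
  · have a := choose3_cast (R := ℚ) (6 + k + x)
    have b := choose3_cast (R := ℚ) (6 + k)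
    have c := choose2_cast (R := ℚ) (5 + k)
    have d := choose2_cast (R := ℚ) x
    have e := choose3_cast (R := ℚ) (x + 1)
    push_cast at a b c d e
    linear_combination a / 6 - b / 6 - (x : ℚ) * c / 2 - (4 + (k : ℚ)) * d / 2 - e / 6
end

section
/- For a shellable pure (d-1)-dimensional simplicial complex with shelling order F_1,...,F_m and restriction faces r(F_j), the h-vector satisfies h_i = #{j : |r(F_j)| = i} for all 0 ≤ i ≤ d. -/
open Finset

theorem sum_range_neg_one_pow_sub_mul_choose (a : ℕ) :
    ∑ t ∈ range (a + 1), (-1 : ℤ) ^ (a - t) * (a.choose t : ℤ) = 0 ^ a := by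
  simpa using (add_pow (1 : ℤ) (-1) a).symm

theorem sum_range_neg_one_pow_mul_choose_sub_mul_choose (n a : ℕ) :
    ∑ t ∈ range (a + 1), (-1 : ℤ) ^ (a - t) * ((n - t).choose (a - t) : ℤ) * (n.choose t : ℤ)
      = 0 ^ a := by
  have hterm : ∀ t ∈ range (a + 1),
      (-1 : ℤ) ^ (a - t) * ((n - t).choose (a - t) : ℤ) * (n.choose t : ℤ)
        = n.choose a * ((-1) ^ (a - t) * (a.choose t : ℤ)) := by
    intro t ht
    have h := Nat.choose_mul (n := n) (Nat.lt_succ_iff.mp (mem_range.mp ht))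
    have h' : (n.choose a : ℤ) * a.choose t = n.choose t * (n - t).choose (a - t) := by
      exact_mod_cast h
    linear_combination (-(-1 : ℤ) ^ (a - t)) * h'
  rw [sum_congr rfl hterm, ← mul_sum, sum_range_neg_one_pow_sub_mul_choose]
  rcases a with _ | a <;> simp

theorem hvec_sum {ι : Type*} (s : Finset ι) (d : ℕ) (g : ι → ℕ → ℤ) (i : ℕ) :
    hvec d (fun k => ∑ j ∈ s, g j k) i = ∑ j ∈ s, hvec d (g j) i := by
  simp only [hvec, mul_sum]
  exact sum_comm

theorem hvec_interval (d ρ i : ℕ) :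
    hvec d (fun k => if ρ ≤ k then ((d - ρ).choose (k - ρ) : ℤ) else 0) i
      = if ρ = i then 1 else 0 := by
  unfold hvec
  beta_reduce
  by_cases hρi : ρ ≤ i
  · obtain ⟨a, rfl⟩ := Nat.exists_eq_add_of_le hρi
    have hbelow : ∀ k ∈ range ρ, (-1 : ℤ) ^ (ρ + a - k) * ((d - k).choose (ρ + a - k) : ℤ) *
        (if ρ ≤ k then ((d - ρ).choose (k - ρ) : ℤ) else 0) = 0 := by
      intro k hk
      rw [if_neg (by simpa using hk), mul_zero]
    have habove : ∀ t ∈ range (a + 1),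
        (-1 : ℤ) ^ (ρ + a - (ρ + t)) * ((d - (ρ + t)).choose (ρ + a - (ρ + t)) : ℤ) *
          (if ρ ≤ ρ + t then ((d - ρ).choose (ρ + t - ρ) : ℤ) else 0)
        = (-1 : ℤ) ^ (a - t) * ((d - ρ - t).choose (a - t) : ℤ) * ((d - ρ).choose t : ℤ) := by
      intro t _
      rw [if_pos (Nat.le_add_right ρ t), Nat.add_sub_add_left, Nat.add_sub_cancel_left,
        Nat.sub_sub]
    rw [add_assoc, sum_range_add, sum_eq_zero hbelow, sum_congr rfl habove,
      sum_range_neg_one_pow_mul_choose_sub_mul_choose]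
    rcases a with _ | a <;> simp
  · rw [if_neg (by omega)]
    refine sum_eq_zero fun k hk => ?_
    rw [if_neg (by simp at hk; omega), mul_zero]

theorem card_filter_Icc_card_eq {V : Type*} [DecidableEq V] {t u : Finset V} (htu : t ⊆ u)
    (k : ℕ) :
    #{s ∈ Icc t u | s.card = k} = if t.card ≤ k then (u.card - t.card).choose (k - t.card) else 0 := by
  split_ifs with htk
  · rw [← card_sdiff_of_subset htu, ← card_powersetCard]
    refine card_bij' (fun s _ => s \ t) (fun w _ => t ∪ w) (fun s hs => ?_) (fun w hw => ?_)
      (fun s hs => ?_) (fun w hw => ?_)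
    · rw [mem_filter, mem_Icc] at hs
      rw [mem_powersetCard, card_sdiff_of_subset hs.1.1, hs.2]
      exact ⟨sdiff_subset_sdiff hs.1.2 subset_rfl, rfl⟩
    · rw [mem_powersetCard, subset_sdiff] at hw
      rw [mem_filter, mem_Icc, card_union_of_disjoint hw.1.2.symm, hw.2]
      exact ⟨⟨subset_union_left, union_subset htu hw.1.1⟩, by omega⟩
    · exact union_sdiff_of_subset (mem_Icc.mp (mem_filter.mp hs).1).1
    · rw [mem_powersetCard, subset_sdiff] at hw
      rw [union_sdiff_left, sdiff_eq_self_of_disjoint hw.1.2]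
  · rw [card_eq_zero, filter_eq_empty_iff]
    intro s hs hsk
    exact htk (hsk ▸ card_le_card (mem_Icc.mp hs).1)

section Shelling

variable {ι V : Type*} [LinearOrder ι] [DecidableEq V] {F r : ι → Finset V}

theorem disjoint_Icc_of_ne (hnew : ∀ j i, i < j → ¬ r j ⊆ F i) {a b : ι} (hab : a ≠ b) :
    Disjoint (Icc (r a) (F a)) (Icc (r b) (F b)) := by
  refine disjoint_left.mpr fun s hsa hsb => ?_
  rw [mem_Icc] at hsa hsb
  rcases hab.lt_or_gt with h | h
  · exact hnew b a h (hsb.1.trans hsa.2)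
  · exact hnew a b h (hsa.1.trans hsb.2)

theorem exists_mem_Icc_iff [WellFoundedLT ι]
    (hmin : ∀ j s, s ⊆ F j → (∀ i, i < j → ¬ s ⊆ F i) → r j ⊆ s) {s : Finset V} :
    (∃ j, s ∈ Icc (r j) (F j)) ↔ ∃ j, s ⊆ F j := by
  refine ⟨fun ⟨j, hj⟩ => ⟨j, (mem_Icc.mp hj).2⟩, fun ⟨j₀, hj₀⟩ => ?_⟩
  obtain ⟨j, hj, hfirst⟩ := wellFounded_lt.has_min {j | s ⊆ F j} ⟨j₀, hj₀⟩
  exact ⟨j, mem_Icc.mpr ⟨hmin j s hj fun i hi his => hfirst i his hi, hj⟩⟩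

theorem card_faces_eq_sum_card_filter_Icc [Fintype ι] [Fintype V]
    [DecidablePred fun s : Finset V => ∃ j, s ⊆ F j] (hnew : ∀ j i, i < j → ¬ r j ⊆ F i)
    (hmin : ∀ j s, s ⊆ F j → (∀ i, i < j → ¬ s ⊆ F i) → r j ⊆ s) (k : ℕ) :
    #{s ∈ (univ : Finset V).powerset | s.card = k ∧ ∃ j, s ⊆ F j}
      = ∑ j, #{s ∈ Icc (r j) (F j) | s.card = k} := by
  have hunion : {s ∈ (univ : Finset V).powerset | s.card = k ∧ ∃ j, s ⊆ F j}
      = univ.biUnion fun j => {s ∈ Icc (r j) (F j) | s.card = k} := by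
    ext s
    simp only [mem_filter, mem_powerset, subset_univ, true_and, mem_biUnion, mem_univ,
      ← exists_mem_Icc_iff hmin]
    tauto
  rw [hunion, card_biUnion]
  intro a _ b _ hab
  exact disjoint_filter_filter (disjoint_Icc_of_ne hnew hab)

end Shelling

open Finset in
theorem stmt12_general {V : Type*} [Fintype V] [DecidableEq V] (d m : ℕ)
    (F : Fin m → Finset V) (hpure : ∀ j, (F j).card = d)
    (r : Fin m → Finset V)
    (hshell : ∀ j : Fin m,
      (r j ⊆ F j ∧ ∀ i, i < j → ¬ r j ⊆ F i) ∧
      ∀ s : Finset V, s ⊆ F j → (∀ i, i < j → ¬ s ⊆ F i) → r j ⊆ s)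
    (f : ℕ → ℤ)
    (hf : ∀ k, f k =
      ((univ.powerset.filter (fun s : Finset V => s.card = k ∧ ∃ j, s ⊆ F j)).card : ℤ)) :
    ∀ i, i ≤ d →
      hvec d f i = ((univ.filter (fun j : Fin m => (r j).card = i)).card : ℤ) := by
  intro i _
  have hfaces : f = fun k =>
      ∑ j, if (r j).card ≤ k then ((d - (r j).card).choose (k - (r j).card) : ℤ) else 0 := by
    funext k
    rw [hf, card_faces_eq_sum_card_filter_Icc (fun j => (hshell j).1.2) (fun j => (hshell j).2)]
    push_cast
    refine sum_congr rfl fun j _ => ?_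
    rw [card_filter_Icc_card_eq (hshell j).1.1, hpure]
    split_ifs <;> simp
  simp only [hfaces, hvec_sum, hvec_interval, sum_boole]

open Finset in
/-- For a shellable pure `(d-1)`-dimensional complex with shelling order
`F 0, …, F (m-1)` and restriction faces `r j` (the unique minimal new face at
each step), the `h`-vector satisfies `h_i = #{j : |r(F_j)| = i}` for `0 ≤ i ≤ d`.
Here the complex consists of all subsets of the facets `F j`, and a face is new
at step `j` if it lies in `F j` but in no earlier facet. -/
theorem stmt12 {V : Type*} [Fintype V] [DecidableEq V] (d m : ℕ) (hm : 0 < m)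
    (F : Fin m → Finset V) (hpure : ∀ j, (F j).card = d)
    (r : Fin m → Finset V)
    (hshell : ∀ j : Fin m,
      (r j ⊆ F j ∧ ∀ i, i < j → ¬ r j ⊆ F i) ∧
      ∀ s : Finset V, s ⊆ F j → (∀ i, i < j → ¬ s ⊆ F i) → r j ⊆ s)
    (f : ℕ → ℤ)
    (hf : ∀ k, f k =
      ((univ.powerset.filter (fun s : Finset V => s.card = k ∧ ∃ j, s ⊆ F j)).card : ℤ)) :
    ∀ i, i ≤ d →
      hvec d f i = ((univ.filter (fun j : Fin m => (r j).card = i)).card : ℤ) :=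
  stmt12_general d m F hpure r hshell f hf
end

section
/- In the reverse-lexicographic order on monomials of fixed degree, any initial segment is also an initial segment (down-set) in the componentwise partial order ≤_p on extended representations: if m is in a rev-lex initial segment S and m' ≤_p m has the same degree, then m' ∈ S. -/
/-- A monomial of degree `≤ c` in the variables `X_1, X_2, …` is encoded by its
extended representation `e : Fin c → ℕ` with `e` nondecreasing (`e k` is the
index of the `k`-th variable, `X_0 = 1` being padding).  Its degree is the
number of non-padding entries. -/
def degree (c : ℕ) (e : Fin c → ℕ) : ℕ :=
  (Finset.univ.filter (fun k => 0 < e k)).card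

/-- The exponent of the variable `X_i` in the monomial with extended
representation `e`. -/
def mult (c : ℕ) (e : Fin c → ℕ) (i : ℕ) : ℕ :=
  (Finset.univ.filter (fun k => e k = i)).card

/-- The reverse-lexicographic order on (same-degree) monomials:
`e <_{rl} e'` iff there is a variable index `k ≥ 1` with equal exponents above
`k` and a strictly smaller exponent at `k`. -/
def revLexLt (c : ℕ) (e e' : Fin c → ℕ) : Prop :=
  ∃ k : ℕ, 1 ≤ k ∧ (∀ i, k < i → mult c e i = mult c e' i) ∧
    mult c e k < mult c e' k

/-! If `m' ≤_p m` and `m' ≠ m`, let `K` be the largest entry of `m` at a position where the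
two differ. Every variable of index `> K` sits at positions where `m'` and `m` agree, so it
occurs equally often in both; `X_K` occurs in `m'` only where `m` also has it, and is missing
at the position attaining `K`. Hence `m' <_{rl} m`. -/

section AgreeAbove

variable {c K : ℕ} {e e' : Fin c → ℕ}

lemma filter_eq_subset_of_le (hle : ∀ j, e' j ≤ e j) (hK : ∀ j, e' j ≠ e j → e j ≤ K)
    {i : ℕ} (hi : K ≤ i) :
    Finset.univ.filter (fun j => e' j = i) ⊆ Finset.univ.filter (fun j => e j = i) := by
  intro j
  simp only [Finset.mem_filter, Finset.mem_univ, true_and]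
  intro hj
  by_contra hne
  have := hK j (by omega)
  have := hle j
  omega

lemma filter_eq_subset_of_lt (hK : ∀ j, e' j ≠ e j → e j ≤ K) {i : ℕ} (hi : K < i) :
    Finset.univ.filter (fun j => e j = i) ⊆ Finset.univ.filter (fun j => e' j = i) := by
  intro j
  simp only [Finset.mem_filter, Finset.mem_univ, true_and]
  intro hj
  by_contra hne
  have := hK j (by omega)
  omega

lemma mult_eq_of_lt (hle : ∀ j, e' j ≤ e j) (hK : ∀ j, e' j ≠ e j → e j ≤ K) {i : ℕ}
    (hi : K < i) : mult c e' i = mult c e i :=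
  congrArg Finset.card <|
    (filter_eq_subset_of_le hle hK hi.le).antisymm (filter_eq_subset_of_lt hK hi)

lemma mult_lt_of_ne (hle : ∀ j, e' j ≤ e j) (hK : ∀ j, e' j ≠ e j → e j ≤ K) {j₀ : Fin c}
    (hne : e' j₀ ≠ e j₀) (hj₀ : e j₀ = K) : mult c e' K < mult c e K := by
  refine Finset.card_lt_card ⟨filter_eq_subset_of_le hle hK le_rfl, fun hsub => hne ?_⟩
  have := hsub (Finset.mem_filter.mpr ⟨Finset.mem_univ j₀, hj₀⟩)
  exact (Finset.mem_filter.mp this).2.trans hj₀.symm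

end AgreeAbove

lemma revLexLt_of_le_of_ne {c : ℕ} {e e' : Fin c → ℕ} (hle : ∀ j, e' j ≤ e j) (hne : e' ≠ e) :
    revLexLt c e' e := by
  have hdiff : (Finset.univ.filter (fun j => e' j ≠ e j)).Nonempty := by
    obtain ⟨j, hj⟩ := Function.ne_iff.mp hne
    exact ⟨j, Finset.mem_filter.mpr ⟨Finset.mem_univ j, hj⟩⟩
  obtain ⟨j₀, hj₀, hmax⟩ := Finset.exists_max_image _ e hdiff
  have hj₀ne : e' j₀ ≠ e j₀ := (Finset.mem_filter.mp hj₀).2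
  have hK : ∀ j, e' j ≠ e j → e j ≤ e j₀ := fun j hj =>
    hmax j (Finset.mem_filter.mpr ⟨Finset.mem_univ j, hj⟩)
  refine ⟨e j₀, ?_, fun i hi => mult_eq_of_lt hle hK hi, mult_lt_of_ne hle hK hj₀ne rfl⟩
  have := hle j₀
  omega

theorem stmt15_general (c D : ℕ) (S : Set (Fin c → ℕ))
    (hinit : ∀ e ∈ S, ∀ e' : Fin c → ℕ, Monotone e' → degree c e' = D →
      (revLexLt c e' e ∨ e' = e) → e' ∈ S)
    (m : Fin c → ℕ) (hm : m ∈ S)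
    (m' : Fin c → ℕ) (hmono' : Monotone m') (hdeg' : degree c m' = D)
    (hple : ∀ k, m' k ≤ m k) :
    m' ∈ S := by
  refine hinit m hm m' hmono' hdeg' ?_
  by_cases heq : m' = m
  · exact Or.inr heq
  · exact Or.inl (revLexLt_of_le_of_ne hple heq)

/-- Any rev-lex initial segment `S` of monomials of a fixed degree `D` is a
down-set in the componentwise partial order `≤_p` on extended representations:
if `m ∈ S` and `m' ≤_p m` has the same degree, then `m' ∈ S`. -/
theorem stmt15 (c D : ℕ) (S : Set (Fin c → ℕ))
    (hSmono : ∀ e ∈ S, Monotone e)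
    (hSdeg : ∀ e ∈ S, degree c e = D)
    (hinit : ∀ e ∈ S, ∀ e' : Fin c → ℕ, Monotone e' → degree c e' = D →
      (revLexLt c e' e ∨ e' = e) → e' ∈ S)
    (m : Fin c → ℕ) (hm : m ∈ S)
    (m' : Fin c → ℕ) (hmono' : Monotone m') (hdeg' : degree c m' = D)
    (hple : ∀ k, m' k ≤ m k) :
    m' ∈ S :=
  stmt15_general c D S hinit m hm m' hmono' hdeg' hple
end

section
/- Let d ≥ 1 be odd, and let F_d(n) be the set of (d+1)-subsets of [n] of the form ∪_{j=1}^{(d+1)/2} {i_j, i_j+1} with i_{j+1} > i_j + 1 for all j. The map α sending such F to the monomial ∏_{j=1}^{(d+1)/2} Y_{e_j} with e_j = i_j - 2j + 1 (Y_0 = 1) is an order-preserving bijection between F_d(n) with the componentwise partial order on sets and the monomials of degree ≤ (d+1)/2 in Y_1,...,Y_{n-d-1} with the componentwise partial order on extended representations. -/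
/-!
Write `i_j = e_j + 2j + 1` (0-indexed `j`) for the start of the `j`-th pair. Monotonicity of `e` is
exactly the condition that consecutive pairs are separated by a gap, `i_j + 1 < i_{j+1}`, and the
bound `e_j ≤ n - d - 1` is the condition that the last pair lies in `[n]`. For separated pairs the
increasing enumeration of the union is `i_1, i_1 + 1, i_2, i_2 + 1, …`, so comparing the sets
componentwise is comparing the `i_j`, that is, the `e_j`.
-/

/-- The set `∪_{j} {i_j, i_j + 1}` determined by a tuple of pair positions. -/
def pairUnion (c : ℕ) (i : Fin c → ℕ) : Finset ℕ :=
  Finset.univ.biUnion (fun j => {i j, i j + 1})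

/-- `F_d(n)`: the `(d+1)`-subsets of `[n]` of the form
`∪_{j=1}^{(d+1)/2} {i_j, i_j + 1}` with `i_{j+1} > i_j + 1` for all `j`. -/
def Fdn (d n : ℕ) : Set (Finset ℕ) :=
  {F | ∃ i : Fin ((d + 1) / 2) → ℕ,
    (∀ j, 1 ≤ i j) ∧ (∀ j, i j + 1 ≤ n) ∧
    (∀ j k : Fin ((d + 1) / 2), (j : ℕ) < (k : ℕ) → i j + 1 < i k) ∧
    F = pairUnion ((d + 1) / 2) i}

/-- Monomials of degree at most `c` in the variables `Y_1, …, Y_b`, encoded by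
their extended representations: nondecreasing tuples `e : Fin c → ℕ` with all
entries `≤ b` (`Y_0 = 1` is padding). -/
def Mon (c b : ℕ) : Set (Fin c → ℕ) :=
  {e | Monotone e ∧ ∀ j, e j ≤ b}

/-- The inverse `α⁻¹` of Kalai's bijection `α`: the monomial with extended
representation `e` maps to the set with `j`-th pair starting at
`i_j = e_j + 2j - 1` (1-indexed), i.e. displaced by `e_j` from its leftmost
possible position. -/
def alphaInv (c : ℕ) (e : Fin c → ℕ) : Finset ℕ :=
  pairUnion c (fun j => e j + 2 * (j : ℕ) + 1)

/-- The componentwise partial order `≤_p` on finite subsets of `ℕ`: comparing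
the increasing enumerations entrywise. -/
def pLeFinset (S T : Finset ℕ) : Prop :=
  List.Forall₂ (· ≤ ·) (S.sort (· ≤ ·)) (T.sort (· ≤ ·))

theorem List.forall₂_ofFn_iff {α β : Type*} {R : α → β → Prop} {n : ℕ} {f : Fin n → α}
    {g : Fin n → β} : Forall₂ R (ofFn f) (ofFn g) ↔ ∀ j, R (f j) (g j) := by
  induction n with
  | zero => simp
  | succ n ih => simp [List.ofFn_succ, ih, Fin.forall_fin_succ]

def pairList (l : List ℕ) : List ℕ :=
  l.flatMap fun a => [a, a + 1]

theorem forall₂_pairList_iff {l l' : List ℕ} :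
    List.Forall₂ (· ≤ ·) (pairList l) (pairList l') ↔ List.Forall₂ (· ≤ ·) l l' := by
  induction l generalizing l' with
  | nil => cases l' <;> simp [pairList]
  | cons a l ih =>
    cases l' with
    | nil => simp [pairList]
    | cons b l' => simp [pairList, ← ih]

theorem pairUnion_eq_toFinset_pairList (c : ℕ) (i : Fin c → ℕ) :
    pairUnion c i = (pairList (List.ofFn i)).toFinset := by
  ext x
  simp [pairUnion, pairList, eq_comm]

def IsSeparated {c : ℕ} (i : Fin c → ℕ) : Prop :=
  ∀ j k : Fin c, j < k → i j + 1 < i k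

namespace IsSeparated

variable {c : ℕ} {i i' : Fin c → ℕ}

theorem pairwise_lt_pairList (hi : IsSeparated i) :
    (pairList (List.ofFn i)).Pairwise (· < ·) := by
  simp only [pairList, List.pairwise_flatMap, List.pairwise_ofFn, List.mem_ofFn]
  refine ⟨by simp, fun j k hjk => ?_⟩
  have := hi j k hjk
  simp only [List.mem_cons, List.not_mem_nil, or_false]
  omega

theorem sort_pairUnion (hi : IsSeparated i) :
    (pairUnion c i).sort (· ≤ ·) = pairList (List.ofFn i) := by
  rw [pairUnion_eq_toFinset_pairList, List.toFinset_sort _ hi.pairwise_lt_pairList.nodup]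
  exact hi.pairwise_lt_pairList.imp le_of_lt

theorem pLeFinset_pairUnion_iff (hi : IsSeparated i) (hi' : IsSeparated i') :
    pLeFinset (pairUnion c i) (pairUnion c i') ↔ ∀ j, i j ≤ i' j := by
  rw [pLeFinset, hi.sort_pairUnion, hi'.sort_pairUnion, forall₂_pairList_iff,
    List.forall₂_ofFn_iff]

theorem add_two_mul_le (hi : IsSeparated i) {j k : Fin c} (hjk : j ≤ k) :
    i j + 2 * (k - j : ℕ) ≤ i k := by
  obtain ⟨m, hm⟩ := Nat.exists_eq_add_of_le (show (j : ℕ) ≤ k from hjk)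
  induction m generalizing k with
  | zero => simp [Fin.ext hm]
  | succ m ih =>
    have hk' : (j : ℕ) + m < c := by omega
    have := ih (k := ⟨j + m, hk'⟩) (Nat.le_add_right _ _) rfl
    have := hi ⟨j + m, hk'⟩ k (show (j : ℕ) + m < k by omega)
    dsimp only at *
    omega

theorem exists_monotone {n : ℕ} (hi : IsSeparated i)
    (hpos : ∀ j, 1 ≤ i j) (hle : ∀ j, i j + 1 ≤ n) :
    ∃ e ∈ Mon c (n - 2 * c), (fun j : Fin c => e j + 2 * (j : ℕ) + 1) = i := by
  have hlow (j : Fin c) : 2 * (j : ℕ) + 1 ≤ i j := by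
    have := hi.add_two_mul_le (j := ⟨0, j.pos⟩) (k := j) (Nat.zero_le _)
    have := hpos ⟨0, j.pos⟩
    dsimp only at *
    omega
  refine ⟨fun j => i j - (2 * (j : ℕ) + 1), ⟨fun j k hjk => ?_, fun j => ?_⟩, ?_⟩
  · have := hi.add_two_mul_le hjk
    have := hlow j
    dsimp only
    omega
  · have hj := j.isLt
    have := hi.add_two_mul_le (j := j) (k := ⟨c - 1, by omega⟩) (Nat.le_sub_one_of_lt hj)
    have := hle ⟨c - 1, by omega⟩
    have := hlow j
    dsimp only at *
    omega
  · funext j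
    have := hlow j
    dsimp only
    omega

end IsSeparated

theorem isSeparated_of_monotone {c : ℕ} {e : Fin c → ℕ} (he : Monotone e) :
    IsSeparated (fun j : Fin c => e j + 2 * (j : ℕ) + 1) := by
  intro j k hjk
  have := he hjk.le
  have : (j : ℕ) < k := hjk
  dsimp only
  omega

theorem pLeFinset_alphaInv_iff {c : ℕ} {e e' : Fin c → ℕ} (he : Monotone e) (he' : Monotone e') :
    pLeFinset (alphaInv c e) (alphaInv c e') ↔ ∀ j, e j ≤ e' j := by
  rw [alphaInv, alphaInv, (isSeparated_of_monotone he).pLeFinset_pairUnion_iff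
    (isSeparated_of_monotone he')]
  simp

theorem alphaInv_injOn {c b : ℕ} : Set.InjOn (alphaInv c) (Mon c b) := by
  intro e he e' he' heq
  have hle := (pLeFinset_alphaInv_iff he.1 he'.1).1 (heq ▸ List.forall₂_refl _)
  have hge := (pLeFinset_alphaInv_iff he'.1 he.1).1 (heq ▸ List.forall₂_refl _)
  exact funext fun j => le_antisymm (hle j) (hge j)

theorem alphaInv_mapsTo {d n : ℕ} (hn : d + 1 ≤ n) :
    Set.MapsTo (alphaInv ((d + 1) / 2)) (Mon ((d + 1) / 2) (n - d - 1)) (Fdn d n) := by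
  rintro e ⟨he, hb⟩
  refine ⟨_, fun j => Nat.le_add_left _ _, fun j => ?_, isSeparated_of_monotone he, rfl⟩
  have := hb j
  have := j.isLt
  omega

theorem alphaInv_surjOn {d n : ℕ} (hd : Odd d) :
    Set.SurjOn (alphaInv ((d + 1) / 2)) (Mon ((d + 1) / 2) (n - d - 1)) (Fdn d n) := by
  rintro _ ⟨i, hpos, hle, hi, rfl⟩
  obtain ⟨e, he, rfl⟩ := IsSeparated.exists_monotone hi hpos hle
  have hc : n - 2 * ((d + 1) / 2) = n - d - 1 := by
    obtain ⟨m, rfl⟩ := hd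
    omega
  exact ⟨e, hc ▸ he, rfl⟩

/-- For odd `d` and `n ≥ d + 1`, the correspondence `α` between `F_d(n)` and the
monomials of degree `≤ (d+1)/2` in `Y_1, …, Y_{n-d-1}` (given by
`e_j = i_j - 2j + 1`) is a bijection, and it is order-preserving between the
componentwise partial orders on extended representations and on sets. -/
theorem stmt19 (d n : ℕ) (hd : Odd d) (hn : d + 1 ≤ n) :
    Set.BijOn (alphaInv ((d + 1) / 2)) (Mon ((d + 1) / 2) (n - d - 1)) (Fdn d n) ∧
    ∀ e ∈ Mon ((d + 1) / 2) (n - d - 1), ∀ e' ∈ Mon ((d + 1) / 2) (n - d - 1),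
      ((∀ j, e j ≤ e' j) ↔
        pLeFinset (alphaInv ((d + 1) / 2) e) (alphaInv ((d + 1) / 2) e')) :=
  ⟨⟨alphaInv_mapsTo hn, alphaInv_injOn, alphaInv_surjOn hd⟩,
    fun _ he _ he' => (pLeFinset_alphaInv_iff he.1 he'.1).symm⟩
end
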